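/- arXiv:0902.0065 — 4 statements merged into one kernel-verified Lean document; each statement's English description precedes it below -/
import Mathlib

section
/- Let λ > 0 and let f : (0,∞) → ℝ be a generalized Stieltjes function of order λ. Then f is C^∞ on (0,∞) and the quantities F^{[λ]}_{n,k}(x) = (−1)^n Σ_{j=0}^{k} binom(k,j) (Γ(n+k+λ)/Γ(n+j+λ)) x^j f^{(n+j)}(x) are nonnegative for all integers n, k ≥ 0 and all x > 0. -/
open MeasureTheory Set Filter

/-- `f` is a generalized Stieltjes function of order `λ`. -/
def IsGenStieltjes (lam : ℝ) (f : ℝ → ℝ) : Prop :=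
  ∃ (C : ℝ) (ρ : Measure ℝ), 0 ≤ C ∧ ρ (Set.Iio 0) = 0 ∧
    (∀ x > (0 : ℝ), Integrable (fun t => (x + t) ^ (-lam)) ρ) ∧
    ∀ x > (0 : ℝ), f x = C + ∫ t, (x + t) ^ (-lam) ∂ρ

/-- `F^{[λ]}_{n,k}(x) = (−1)^n Σ_{j=0}^{k} C(k,j) (Γ(n+k+λ)/Γ(n+j+λ)) x^j f^{(n+j)}(x)`. -/
noncomputable def Fgen (lam : ℝ) (f : ℝ → ℝ) (n k : ℕ) (x : ℝ) : ℝ :=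
  (-1 : ℝ) ^ n * ∑ j ∈ Finset.range (k + 1),
    (k.choose j : ℝ) * (Real.Gamma ((n : ℝ) + k + lam) / Real.Gamma ((n : ℝ) + j + lam)) *
      x ^ j * iteratedDerivWithin (n + j) f (Set.Ioi 0) x

section StieltjesAux
variable {lam : ℝ} {ρ : Measure ℝ}

lemma meas_aux (p x : ℝ) : AEStronglyMeasurable (fun t : ℝ => (x + t) ^ (-p)) ρ :=
  ((measurable_const.add measurable_id).pow_const _).aestronglyMeasurable

lemma int_aux (haet : ∀ᵐ t ∂ρ, 0 ≤ t)
    (hInt : ∀ x > (0:ℝ), Integrable (fun t => (x + t) ^ (-lam)) ρ)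
    {p : ℝ} (hp : lam ≤ p) : ∀ x > (0:ℝ), Integrable (fun t => (x + t) ^ (-p)) ρ := by
  intro x hx
  refine Integrable.mono ((hInt x hx).const_mul (x ^ (lam - p))) (meas_aux p x) ?_
  filter_upwards [haet] with t ht
  have hxt : 0 < x + t := by linarith
  rw [Real.norm_eq_abs, Real.norm_eq_abs, abs_of_nonneg (Real.rpow_nonneg hxt.le _),
    abs_of_nonneg (mul_nonneg (Real.rpow_nonneg hx.le _) (Real.rpow_nonneg hxt.le _))]
  calc (x+t) ^ (-p) = (x+t) ^ (lam - p) * (x+t) ^ (-lam) := by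
        rw [← Real.rpow_add hxt]; ring_nf
    _ ≤ x ^ (lam - p) * (x+t) ^ (-lam) := by
        refine mul_le_mul_of_nonneg_right ?_ (Real.rpow_nonneg hxt.le _)
        exact Real.rpow_le_rpow_of_nonpos hx (by linarith) (by linarith)

lemma hasDeriv_aux (hlam : 0 < lam) (haet : ∀ᵐ t ∂ρ, 0 ≤ t)
    (hInt : ∀ x > (0:ℝ), Integrable (fun t => (x + t) ^ (-lam)) ρ)
    {p : ℝ} (hp : lam ≤ p) {x₀ : ℝ} (hx₀ : 0 < x₀) :
    HasDerivAt (fun x => ∫ t, (x + t) ^ (-p) ∂ρ)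
      (-p * ∫ t, (x₀ + t) ^ (-(p+1)) ∂ρ) x₀ := by
  have hppos : 0 < p := lt_of_lt_of_le hlam hp
  have key := hasDerivAt_integral_of_dominated_loc_of_deriv_le (μ := ρ) (x₀ := x₀)
    (F := fun x t => (x + t) ^ (-p)) (F' := fun x t => (-p) * (x + t) ^ (-(p+1)))
    (bound := fun t => p * (x₀/2 + t) ^ (-(p+1))) (Metric.ball_mem_nhds x₀ (half_pos hx₀))
    (Eventually.of_forall fun x => meas_aux p x)
    (int_aux haet hInt hp x₀ hx₀)
    ((((measurable_const.add measurable_id).pow_const _).const_mul _).aestronglyMeasurable)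
    ?_ (((int_aux haet hInt (by linarith) (x₀/2) (half_pos hx₀))).const_mul p) ?_
  · rw [← MeasureTheory.integral_const_mul]
    exact key.2
  · filter_upwards [haet] with t ht
    intro x hx
    have hx2 : x₀/2 < x := by
      have := abs_lt.mp (by simpa [Real.dist_eq] using Metric.mem_ball.mp hx)
      linarith [this.1]
    have hxt : (0:ℝ) < x + t := by linarith
    rw [norm_mul, Real.norm_eq_abs, Real.norm_eq_abs, abs_neg, abs_of_pos hppos,
      abs_of_nonneg (Real.rpow_nonneg hxt.le _)]
    refine mul_le_mul_of_nonneg_left ?_ hppos.le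
    exact Real.rpow_le_rpow_of_nonpos (by linarith) (by linarith) (by linarith)
  · filter_upwards [haet] with t ht
    intro x hx
    have hx2 : x₀/2 < x := by
      have := abs_lt.mp (by simpa [Real.dist_eq] using Metric.mem_ball.mp hx)
      linarith [this.1]
    have hxt : (0:ℝ) < x + t := by linarith
    have h1 := (Real.hasDerivAt_rpow_const (x := x + t) (p := -p)
      (Or.inl hxt.ne')).comp x ((hasDerivAt_id x).add_const t)
    have he : -p * (x + t) ^ (-p - 1) * 1 = -p * (x + t) ^ (-(p+1)) := by
      rw [show -p - 1 = -(p+1) by ring]; ring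
    rw [← he]
    exact h1

-- norm of complex power
lemma cnorm_aux {z : ℂ} {t : ℝ} (h : 0 < z.re + t) {p : ℝ} (hp : 0 ≤ p) :
    ‖(z + (t:ℂ)) ^ (-(p:ℂ))‖ ≤ (z.re + t) ^ (-p) := by
  have hre : 0 < (z + (t:ℂ)).re := by simpa using h
  have hne : z + (t:ℂ) ≠ 0 := fun hz => by rw [hz] at hre; simp at hre
  rw [Complex.norm_cpow_of_ne_zero hne]
  simp only [Complex.neg_re, Complex.ofReal_re, Complex.neg_im, Complex.ofReal_im, neg_zero,
    mul_zero, Real.exp_zero, div_one]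
  refine Real.rpow_le_rpow_of_nonpos h ?_ (neg_nonpos.mpr hp)
  · calc z.re + t = (z + (t:ℂ)).re := by simp
      _ ≤ ‖z + (t:ℂ)‖ := Complex.re_le_norm _

lemma cmeas_aux (z : ℂ) (p : ℝ) :
    AEStronglyMeasurable (fun t : ℝ => (z + (t:ℂ)) ^ (-(p:ℂ))) ρ :=
  ((measurable_const.add Complex.measurable_ofReal).pow_const _).aestronglyMeasurable

lemma cint_aux (hlam : 0 < lam) (haet : ∀ᵐ t ∂ρ, 0 ≤ t)
    (hInt : ∀ x > (0:ℝ), Integrable (fun t => (x + t) ^ (-lam)) ρ)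
    {p : ℝ} (hp : lam ≤ p) {z : ℂ} (hz : 0 < z.re) :
    Integrable (fun t : ℝ => (z + (t:ℂ)) ^ (-(p:ℂ))) ρ := by
  refine Integrable.mono' (int_aux haet hInt hp z.re hz) (cmeas_aux z p) ?_
  filter_upwards [haet] with t ht
  exact cnorm_aux (by linarith) (le_trans hlam.le hp)

lemma chasDeriv_aux (hlam : 0 < lam) (haet : ∀ᵐ t ∂ρ, 0 ≤ t)
    (hInt : ∀ x > (0:ℝ), Integrable (fun t => (x + t) ^ (-lam)) ρ)
    {z₀ : ℂ} (hz₀ : 0 < z₀.re) :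
    ∃ d, HasDerivAt (fun z : ℂ => ∫ t, (z + (t:ℂ)) ^ (-(lam:ℂ)) ∂ρ) d z₀ := by
  have key := hasDerivAt_integral_of_dominated_loc_of_deriv_le (μ := ρ) (x₀ := z₀)
    (F := fun (z:ℂ) (t:ℝ) => (z + (t:ℂ)) ^ (-(lam:ℂ)))
    (F' := fun z t => (-(lam:ℂ)) * (z + (t:ℂ)) ^ (-(lam:ℂ) - 1))
    (bound := fun t => lam * (z₀.re/2 + t) ^ (-(lam+1)))
    (Metric.ball_mem_nhds z₀ (half_pos hz₀)) (Eventually.of_forall fun z => cmeas_aux z lam)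
    (cint_aux hlam haet hInt le_rfl hz₀)
    ((((measurable_const.add Complex.measurable_ofReal).pow_const _).const_mul
      _).aestronglyMeasurable)
    ?_ ((int_aux haet hInt (by linarith) _ (half_pos hz₀)).const_mul lam) ?_
  · exact ⟨_, key.2⟩
  · filter_upwards [haet] with t ht
    intro z hz
    have hre : z₀.re/2 < z.re := by
      have h1 : |(z - z₀).re| ≤ ‖z - z₀‖ := Complex.abs_re_le_norm _
      have h2 : ‖z - z₀‖ < z₀.re/2 := by
        simpa [Complex.dist_eq] using Metric.mem_ball.mp hz
      have h3 := abs_lt.mp (lt_of_le_of_lt h1 h2)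
      have h4 := h3.1
      simp only [Complex.sub_re] at h4
      linarith
    have hcast : -(lam:ℂ) - 1 = -(((lam + 1 : ℝ)):ℂ) := by push_cast; ring
    rw [norm_mul, hcast]
    have hb1 : ‖(z + (t:ℂ)) ^ (-((lam + 1 : ℝ):ℂ))‖ ≤ (z.re + t) ^ (-(lam+1)) :=
      cnorm_aux (by linarith) (by linarith)
    have hb2 : (z.re + t) ^ (-(lam+1)) ≤ (z₀.re/2 + t) ^ (-(lam+1)) :=
      Real.rpow_le_rpow_of_nonpos (by linarith) (by linarith) (by linarith)
    have hb3 : ‖(-(lam:ℂ))‖ = lam := by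
      rw [norm_neg, Complex.norm_real, Real.norm_eq_abs, abs_of_pos hlam]
    rw [hb3]
    exact mul_le_mul_of_nonneg_left (le_trans hb1 hb2) hlam.le
  · filter_upwards [haet] with t ht
    intro z hz
    have hre : z₀.re/2 < z.re := by
      have h1 : |(z - z₀).re| ≤ ‖z - z₀‖ := Complex.abs_re_le_norm _
      have h2 : ‖z - z₀‖ < z₀.re/2 := by
        simpa [Complex.dist_eq] using Metric.mem_ball.mp hz
      have h3 := abs_lt.mp (lt_of_le_of_lt h1 h2)
      have h4 := h3.1
      simp only [Complex.sub_re] at h4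
      linarith
    have h0 : z + (t:ℂ) ∈ Complex.slitPlane := by
      rw [Complex.mem_slitPlane_iff]
      left; simp only [Complex.add_re, Complex.ofReal_re]; linarith
    have hd := ((hasDerivAt_id z).add_const (t:ℂ)).cpow_const (c := -(lam:ℂ)) h0
    simpa using hd

lemma creal_aux (haet : ∀ᵐ t ∂ρ, 0 ≤ t) {y : ℝ} (hy : 0 < y) :
    (∫ t, ((y:ℂ) + (t:ℂ)) ^ (-(lam:ℂ)) ∂ρ) = ((∫ t, (y + t) ^ (-lam) ∂ρ : ℝ) : ℂ) := by
  rw [show ((∫ t, (y + t) ^ (-lam) ∂ρ : ℝ) : ℂ) = ∫ t, (((y + t) ^ (-lam) : ℝ) : ℂ) ∂ρ from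
    (integral_ofReal (𝕜 := ℂ)).symm]
  refine integral_congr_ae ?_
  filter_upwards [haet] with t ht
  have h1 : ((y:ℂ) + (t:ℂ)) = ((y + t : ℝ) : ℂ) := by push_cast; ring
  rw [h1, Complex.ofReal_cpow (by linarith : (0:ℝ) ≤ y + t) (-lam)]
  congr 1
  push_cast
  ring

lemma iterG_aux (hlam : 0 < lam) (haet : ∀ᵐ t ∂ρ, 0 ≤ t)
    (hInt : ∀ x > (0:ℝ), Integrable (fun t => (x + t) ^ (-lam)) ρ) :
    ∀ (n : ℕ), ∀ x ∈ Ioi (0:ℝ),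
    iteratedDerivWithin n (fun x => ∫ t, (x + t) ^ (-lam) ∂ρ) (Ioi 0) x
      = ((-1:ℝ)^n * (Real.Gamma (lam + n) / Real.Gamma lam)) *
          ∫ t, (x + t) ^ (-(lam + n)) ∂ρ := by
  intro n
  induction n with
  | zero =>
    intro x hx
    simp [div_self (Real.Gamma_pos_of_pos hlam).ne']
  | succ n IH =>
    intro x hx
    have hU : UniqueDiffWithinAt ℝ (Ioi (0:ℝ)) x := (uniqueDiffOn_Ioi 0) x hx
    rw [iteratedDerivWithin_succ, derivWithin_of_isOpen isOpen_Ioi hx]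
    have hEq : (iteratedDerivWithin n (fun x => ∫ t, (x + t) ^ (-lam) ∂ρ) (Ioi 0))
        =ᶠ[nhds x] fun y => ((-1:ℝ)^n * (Real.Gamma (lam + n) / Real.Gamma lam)) *
          ∫ t, (y + t) ^ (-(lam + n)) ∂ρ :=
      eventuallyEq_of_mem (isOpen_Ioi.mem_nhds hx) IH
    rw [hEq.deriv_eq]
    have hd := (hasDeriv_aux hlam haet hInt (p := lam + n)
      (le_add_of_nonneg_right n.cast_nonneg) hx).const_mul
      ((-1:ℝ)^n * (Real.Gamma (lam + n) / Real.Gamma lam))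
    rw [hd.deriv]
    rw [show ((n+1:ℕ):ℝ) = (n:ℝ) + 1 by push_cast; ring]
    rw [show -(lam + ((n:ℝ)+1)) = -(lam + (n:ℝ) + 1) by ring]
    rw [show lam + ((n:ℝ)+1) = (lam + (n:ℝ)) + 1 by ring]
    rw [Real.Gamma_add_one (by positivity : lam + (n:ℝ) ≠ 0)]
    ring
end StieltjesAux

/-- a generalized Stieltjes function of order `λ > 0` is `C^∞` on `(0,∞)`
and all the quantities `F^{[λ]}_{n,k}(x)` are nonnegative. -/
theorem stmt1 (lam : ℝ) (hlam : 0 < lam) (f : ℝ → ℝ) (hf : IsGenStieltjes lam f) :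
    ContDiffOn ℝ (⊤ : ℕ∞) f (Set.Ioi 0) ∧
      ∀ (n k : ℕ), ∀ x > (0 : ℝ), 0 ≤ Fgen lam f n k x := by
  obtain ⟨C, ρ, hC, hρ0, hInt, hfx⟩ := hf
  have haet : ∀ᵐ t ∂ρ, 0 ≤ t := by
    rw [ae_iff]
    have : {t : ℝ | ¬ 0 ≤ t} = Iio 0 := by ext t; simp [not_le]
    rw [this]; exact hρ0
  have hGl : (0:ℝ) < Real.Gamma lam := Real.Gamma_pos_of_pos hlam
  -- iterated derivatives of f
  have hDf : ∀ (m : ℕ), ∀ x ∈ Ioi (0:ℝ), iteratedDerivWithin m f (Ioi 0) x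
      = (if m = 0 then C else 0) + ((-1:ℝ)^m * (Real.Gamma (lam + m) / Real.Gamma lam)) *
          ∫ t, (x + t) ^ (-(lam + m)) ∂ρ := by
    intro m x hx
    have h1 : iteratedDerivWithin m f (Ioi 0) x
        = iteratedDerivWithin m (fun y => C + ∫ t, (y + t) ^ (-lam) ∂ρ) (Ioi 0) x :=
      iteratedDerivWithin_congr (fun y hy => hfx y hy) hx
    rcases Nat.eq_zero_or_pos m with hm | hm
    · subst hm
      rw [show iteratedDerivWithin 0 f (Ioi 0) x = f x by rw [iteratedDerivWithin_zero],
        hfx x hx]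
      simp [div_self hGl.ne']
    · rw [h1, iteratedDerivWithin_const_add hm C,
        iterG_aux hlam haet hInt m x hx, if_neg (Nat.pos_iff_ne_zero.mp hm), zero_add]
  constructor
  · -- smoothness via analyticity
    have hopen : IsOpen {z : ℂ | 0 < z.re} := isOpen_lt continuous_const Complex.continuous_re
    have hdiff : DifferentiableOn ℂ (fun z : ℂ => ∫ t, (z + (t:ℂ)) ^ (-(lam:ℂ)) ∂ρ)
        {z : ℂ | 0 < z.re} := by
      intro z hz
      obtain ⟨d, hd⟩ := chasDeriv_aux hlam haet hInt hz
      exact hd.differentiableAt.differentiableWithinAt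
    have hAn := hdiff.analyticOnNhd hopen
    intro x hx
    have hx' : (0:ℝ) < x := hx
    have h1 : AnalyticAt ℂ (fun z : ℂ => ∫ t, (z + (t:ℂ)) ^ (-(lam:ℂ)) ∂ρ) (x:ℂ) :=
      hAn (x:ℂ) (by simpa using hx')
    have h3 : AnalyticAt ℝ (fun y : ℝ => ∫ t, ((y:ℂ) + (t:ℂ)) ^ (-(lam:ℂ)) ∂ρ) x :=
      h1.restrictScalars.comp (Complex.ofRealCLM.analyticAt x)
    have h4 : AnalyticAt ℝ
        (fun y : ℝ => C + (∫ t, ((y:ℂ) + (t:ℂ)) ^ (-(lam:ℂ)) ∂ρ).re) x :=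
      analyticAt_const.add ((Complex.reCLM.analyticAt _).comp h3)
    have h5 : AnalyticAt ℝ f x := by
      refine h4.congr ?_
      filter_upwards [isOpen_Ioi.mem_nhds hx] with y hy
      rw [creal_aux haet hy, Complex.ofReal_re, ← hfx y hy]
    exact h5.contDiffAt.contDiffWithinAt
  · -- nonnegativity
    intro n k x hx
    have hIintm : ∀ m : ℕ, Integrable (fun t => (x+t) ^ (-(lam + (m:ℝ)))) ρ := fun m =>
      int_aux haet hInt (le_add_of_nonneg_right (Nat.cast_nonneg m)) x hx
    have hGnk : (0:ℝ) < Real.Gamma ((n:ℝ) + k + lam) :=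
      Real.Gamma_pos_of_pos (add_pos_of_nonneg_of_pos (by positivity) hlam)
    -- the sum-integral identity
    have hsum : ∑ j ∈ Finset.range (k+1),
        ((k.choose j : ℝ) * (-x)^j) * ∫ t, (x+t) ^ (-(lam + ((n+j:ℕ):ℝ))) ∂ρ
        = ∫ t, t^k * (x+t) ^ (-(lam + ((n+k:ℕ):ℝ))) ∂ρ := by
      simp_rw [← MeasureTheory.integral_const_mul]
      rw [← integral_finset_sum _ (fun j _ => (hIintm (n+j)).const_mul ((k.choose j : ℝ) * (-x)^j))]
      refine integral_congr_ae ?_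
      filter_upwards [haet] with t ht
      have hxt : (0:ℝ) < x + t := by linarith
      have hrw : ∀ j ∈ Finset.range (k+1),
          ((k.choose j : ℝ) * (-x)^j) * (x+t) ^ (-(lam + ((n+j:ℕ):ℝ)))
          = ((-x)^j * (x+t)^(k-j) * (k.choose j : ℝ)) * (x+t) ^ (-(lam + ((n+k:ℕ):ℝ))) := by
        intro j hj
        have hj' : j ≤ k := Nat.lt_succ_iff.mp (Finset.mem_range.mp hj)
        have he : -(lam + ((n+j:ℕ):ℝ)) = ((k - j : ℕ):ℝ) + (-(lam + ((n+k:ℕ):ℝ))) := by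
          rw [Nat.cast_sub hj']; push_cast; ring
        rw [he, Real.rpow_add hxt, Real.rpow_natCast]
        ring
      rw [Finset.sum_congr rfl hrw, ← Finset.sum_mul, ← add_pow]
      ring_nf
    -- rewrite Fgen
    have hexp : Fgen lam f n k x
        = (∑ j ∈ Finset.range (k+1), (-1:ℝ)^n * ((k.choose j : ℝ) *
            (Real.Gamma ((n:ℝ)+k+lam) / Real.Gamma ((n:ℝ)+j+lam)) * x^j *
            (if n+j = 0 then C else 0)))
          + (Real.Gamma ((n:ℝ)+k+lam) / Real.Gamma lam) *
            ∑ j ∈ Finset.range (k+1),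
              ((k.choose j : ℝ) * (-x)^j) * ∫ t, (x+t) ^ (-(lam + ((n+j:ℕ):ℝ))) ∂ρ := by
      rw [Fgen, Finset.mul_sum, Finset.mul_sum, ← Finset.sum_add_distrib]
      refine Finset.sum_congr rfl ?_
      intro j hj
      rw [hDf (n+j) x hx]
      have hGnj : Real.Gamma ((n:ℝ)+j+lam) ≠ 0 :=
        (Real.Gamma_pos_of_pos (add_pos_of_nonneg_of_pos (by positivity) hlam)).ne'
      have hgamma : Real.Gamma (lam + ((n+j:ℕ):ℝ)) = Real.Gamma ((n:ℝ)+j+lam) := by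
        congr 1; push_cast; ring
      rw [hgamma]
      have h2 : ((-1:ℝ))^n * (-1)^n = 1 := by rw [← mul_pow]; norm_num
      have key : (-1:ℝ)^n * ((-1:ℝ)^(n+j) * (Real.Gamma ((n:ℝ)+j+lam) / Real.Gamma lam)) *
          (Real.Gamma ((n:ℝ)+k+lam) / Real.Gamma ((n:ℝ)+j+lam))
          = (-1:ℝ)^j * (Real.Gamma ((n:ℝ)+k+lam) / Real.Gamma lam) := by
        calc (-1:ℝ)^n * ((-1:ℝ)^(n+j) * (Real.Gamma ((n:ℝ)+j+lam) / Real.Gamma lam)) *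
            (Real.Gamma ((n:ℝ)+k+lam) / Real.Gamma ((n:ℝ)+j+lam))
            = ((-1:ℝ)^n * (-1)^n) * ((-1:ℝ)^j *
              ((Real.Gamma ((n:ℝ)+j+lam) * Real.Gamma ((n:ℝ)+k+lam)) /
                (Real.Gamma ((n:ℝ)+j+lam) * Real.Gamma lam))) := by
              rw [pow_add]; field_simp
          _ = (-1:ℝ)^j * (Real.Gamma ((n:ℝ)+k+lam) / Real.Gamma lam) := by
              rw [h2, one_mul, mul_div_mul_left _ _ hGnj]
      linear_combination ((k.choose j : ℝ) * x^j *
        (∫ t, (x+t) ^ (-(lam + ((n+j:ℕ):ℝ))) ∂ρ)) * key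
    rw [hexp]
    have hT1 : (0:ℝ) ≤ ∑ j ∈ Finset.range (k+1), (-1:ℝ)^n * ((k.choose j : ℝ) *
        (Real.Gamma ((n:ℝ)+k+lam) / Real.Gamma ((n:ℝ)+j+lam)) * x^j *
        (if n+j = 0 then C else 0)) := by
      refine Finset.sum_nonneg ?_
      intro j hj
      by_cases h : n + j = 0
      · have hn : n = 0 := (Nat.add_eq_zero.mp h).1
        subst hn
        rw [if_pos h, pow_zero, one_mul]
        refine mul_nonneg (mul_nonneg (mul_nonneg (Nat.cast_nonneg _)
          (div_nonneg (Real.Gamma_pos_of_pos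
            (add_pos_of_nonneg_of_pos (by positivity) hlam)).le
          (Real.Gamma_pos_of_pos
            (add_pos_of_nonneg_of_pos (by positivity) hlam)).le))
          (pow_nonneg (le_of_lt hx) _)) hC
      · rw [if_neg h]; simp
    have hT2 : (0:ℝ) ≤ (Real.Gamma ((n:ℝ)+k+lam) / Real.Gamma lam) *
        ∑ j ∈ Finset.range (k+1),
          ((k.choose j : ℝ) * (-x)^j) * ∫ t, (x+t) ^ (-(lam + ((n+j:ℕ):ℝ))) ∂ρ := by
      rw [hsum]
      refine mul_nonneg (div_nonneg hGnk.le hGl.le) (integral_nonneg_of_ae ?_)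
      filter_upwards [haet] with t ht
      exact mul_nonneg (pow_nonneg ht k) (Real.rpow_nonneg (by linarith) _)
    linarith
end

section
/- Let 0 < λ ≤ λ′. If f : (0,∞) → ℝ is a generalized Stieltjes function of order λ, then f is a generalized Stieltjes function of order λ′; that is, S_λ ⊆ S_{λ′}. -/
/-! For `0 < λ < λ'` and `u > 0`, the substitution `s = uσ` gives
`∫₀^∞ s^(λ'-λ-1) (u+s)^(-λ') ds = B(λ'-λ, λ) u^(-λ)`.
Hence `(x+t)^(-λ) = ∫ (x+t+s)^(-λ') dμ(s)` for the measure
`dμ = B(λ'-λ, λ)⁻¹ s^(λ'-λ-1) ds` on `(0, ∞)`, and integrating in `t` against `ρ` (Tonelli)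
shows that the same constant `C` and the convolution `ρ ∗ μ` represent `f` in order `λ'`. -/

open MeasureTheory Set Filter

open Real

section BetaIntegral

variable {a b : ℝ}

lemma integrableOn_rpow_mul_one_add_rpow_neg (ha : 0 < a) (hab : a < b) :
    IntegrableOn (fun σ : ℝ => σ ^ (a - 1) * (1 + σ) ^ (-b)) (Ioi 0) := by
  have hmeas : AEStronglyMeasurable (fun σ : ℝ => σ ^ (a - 1) * (1 + σ) ^ (-b)) :=
    (by fun_prop : Measurable fun σ : ℝ => σ ^ (a - 1) * (1 + σ) ^ (-b)).aestronglyMeasurable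
  rw [← Ioc_union_Ioi_eq_Ioi zero_le_one]
  refine IntegrableOn.union ?_ ?_
  · have hdom : IntegrableOn (fun σ : ℝ => σ ^ (a - 1)) (Ioc 0 1) :=
      (intervalIntegral.intervalIntegrable_rpow' (by linarith)).1
    refine hdom.mono' hmeas.restrict ?_
    filter_upwards [ae_restrict_mem measurableSet_Ioc] with σ hσ
    have hσ0 : 0 < σ := hσ.1
    rw [norm_of_nonneg (by positivity)]
    exact mul_le_of_le_one_right (by positivity)
      (rpow_le_one_of_one_le_of_nonpos (by linarith) (by linarith))
  · have hdom : IntegrableOn (fun σ : ℝ => σ ^ (a - 1 - b)) (Ioi 1) :=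
      integrableOn_Ioi_rpow_of_lt (by linarith) one_pos
    refine hdom.mono' hmeas.restrict ?_
    filter_upwards [ae_restrict_mem measurableSet_Ioi] with σ hσ
    have hσ0 : 0 < σ := one_pos.trans hσ
    rw [norm_of_nonneg (by positivity), sub_eq_add_neg _ b, rpow_add hσ0]
    exact mul_le_mul_of_nonneg_left
      (rpow_le_rpow_of_nonpos hσ0 (by linarith) (by linarith)) (by positivity)

lemma integral_rpow_mul_one_add_rpow_neg_pos (ha : 0 < a) (hab : a < b) :
    0 < ∫ σ in Ioi (0 : ℝ), σ ^ (a - 1) * (1 + σ) ^ (-b) := by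
  have hpos : ∀ σ ∈ Ioi (0 : ℝ), 0 < σ ^ (a - 1) * (1 + σ) ^ (-b) :=
    fun σ (hσ : 0 < σ) => by positivity
  rw [setIntegral_pos_iff_support_of_nonneg_ae
    ((ae_restrict_iff' measurableSet_Ioi).2 (.of_forall fun σ hσ => (hpos σ hσ).le))
    (integrableOn_rpow_mul_one_add_rpow_neg ha hab),
    inter_eq_self_of_subset_right fun σ hσ => Function.mem_support.2 (hpos σ hσ).ne']
  simp

lemma rpow_mul_add_rpow_neg_eq {u : ℝ} (hu : 0 < u) {σ : ℝ} (hσ : 0 < σ) :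
    (u * σ) ^ (a - 1) * (u + u * σ) ^ (-b)
      = u⁻¹ * u ^ (a - b) * (σ ^ (a - 1) * (1 + σ) ^ (-b)) := by
  rw [mul_rpow hu.le hσ.le, ← mul_one_add, mul_rpow hu.le (by linarith),
    show a - b = 1 + (a - 1) + -b by ring, rpow_add hu, rpow_add hu, rpow_one]
  field_simp

lemma integrableOn_rpow_mul_add_rpow_neg (ha : 0 < a) (hab : a < b) {u : ℝ} (hu : 0 < u) :
    IntegrableOn (fun s : ℝ => s ^ (a - 1) * (u + s) ^ (-b)) (Ioi 0) := by
  rw [← mul_zero u, ← integrableOn_Ioi_comp_mul_left_iff _ 0 hu]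
  exact IntegrableOn.congr_fun
    ((integrableOn_rpow_mul_one_add_rpow_neg ha hab).const_mul (u⁻¹ * u ^ (a - b)))
    (fun σ hσ => (rpow_mul_add_rpow_neg_eq hu hσ).symm) measurableSet_Ioi

lemma integral_rpow_mul_add_rpow_neg {u : ℝ} (hu : 0 < u) :
    ∫ s in Ioi (0 : ℝ), s ^ (a - 1) * (u + s) ^ (-b)
      = u ^ (a - b) * ∫ σ in Ioi (0 : ℝ), σ ^ (a - 1) * (1 + σ) ^ (-b) := by
  have h := integral_comp_mul_left_Ioi' (fun s : ℝ => s ^ (a - 1) * (u + s) ^ (-b)) 0 hu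
  rw [mul_zero, setIntegral_congr_fun measurableSet_Ioi
    (fun σ hσ => rpow_mul_add_rpow_neg_eq hu hσ), integral_const_mul, smul_eq_mul] at h
  rw [← h]
  field_simp

end BetaIntegral

noncomputable def orderRaisingMeasure (lam lam' : ℝ) : Measure ℝ :=
  (volume.restrict (Ioi 0)).withDensity fun s => ENNReal.ofReal
    (s ^ (lam' - lam - 1) / ∫ σ in Ioi (0 : ℝ), σ ^ (lam' - lam - 1) * (1 + σ) ^ (-lam'))

instance (lam lam' : ℝ) : SFinite (orderRaisingMeasure lam lam') := by
  unfold orderRaisingMeasure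
  infer_instance

lemma orderRaisingMeasure_Iio_eq_zero (lam lam' : ℝ) :
    orderRaisingMeasure lam lam' (Iio 0) = 0 := by
  rw [orderRaisingMeasure, withDensity_apply _ measurableSet_Iio,
    Measure.restrict_restrict measurableSet_Iio, Iio_inter_Ioi, Ioo_self,
    Measure.restrict_empty, lintegral_zero_measure]

lemma lintegral_add_rpow_neg_orderRaisingMeasure {lam lam' u : ℝ} (hlam : 0 < lam)
    (hlt : lam < lam') (hu : 0 < u) :
    ∫⁻ s, ENNReal.ofReal ((u + s) ^ (-lam')) ∂orderRaisingMeasure lam lam'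
      = ENNReal.ofReal (u ^ (-lam)) := by
  set K := ∫ σ in Ioi (0 : ℝ), σ ^ (lam' - lam - 1) * (1 + σ) ^ (-lam')
  have hK : 0 < K := integral_rpow_mul_one_add_rpow_neg_pos (by linarith) (by linarith)
  rw [orderRaisingMeasure, lintegral_withDensity_eq_lintegral_mul _ (by fun_prop) (by fun_prop),
    setLIntegral_congr_fun measurableSet_Ioi (g := fun s => ENNReal.ofReal
      (K⁻¹ * (s ^ (lam' - lam - 1) * (u + s) ^ (-lam')))) fun s (hs : 0 < s) => by
        rw [Pi.mul_apply, ← ENNReal.ofReal_mul (by positivity), div_eq_inv_mul, mul_assoc],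
    ← ofReal_integral_eq_lintegral_ofReal
      ((integrableOn_rpow_mul_add_rpow_neg (by linarith) (by linarith) hu).const_mul _)
      ((ae_restrict_iff' measurableSet_Ioi).2 (.of_forall fun s (hs : 0 < s) => by positivity)),
    integral_const_mul, integral_rpow_mul_add_rpow_neg hu, show lam' - lam - lam' = -lam by ring,
    mul_left_comm, inv_mul_cancel₀ hK.ne', mul_one]

lemma ae_nonneg_of_measure_Iio_eq_zero {ρ : Measure ℝ} (h : ρ (Iio 0) = 0) :
    ∀ᵐ t ∂ρ, 0 ≤ t :=
  (measure_eq_zero_iff_ae_notMem.1 h).mono fun _ ht => not_lt.1 ht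

lemma conv_Iio_eq_zero {ρ μ : Measure ℝ} (hρ : ρ (Iio 0) = 0) (hμ : μ (Iio 0) = 0) :
    (ρ ∗ μ) (Iio 0) = 0 := by
  have hsub :
      (fun p : ℝ × ℝ => p.1 + p.2) ⁻¹' Iio 0 ⊆ Iio 0 ×ˢ univ ∪ univ ×ˢ Iio 0 := by
    intro p hp
    simp only [mem_preimage, mem_Iio] at hp
    simp only [mem_union, mem_prod, mem_Iio, mem_univ, and_true, true_and]
    by_contra! h
    linarith [h.1, h.2]
  rw [Measure.conv, Measure.map_apply measurable_add measurableSet_Iio]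
  refine measure_mono_null hsub (measure_union_null ?_ ?_)
  · exact nonpos_iff_eq_zero.1 ((Measure.prod_prod_le _ _).trans_eq (by rw [hρ, zero_mul]))
  · exact nonpos_iff_eq_zero.1 ((Measure.prod_prod_le _ _).trans_eq (by rw [hμ, mul_zero]))

lemma lintegral_rpow_neg_conv_orderRaisingMeasure {lam lam' : ℝ} (hlam : 0 < lam)
    (hlt : lam < lam') {ρ : Measure ℝ} (hρ : ρ (Iio 0) = 0) {x : ℝ} (hx : 0 < x) :
    ∫⁻ u, ENNReal.ofReal ((x + u) ^ (-lam')) ∂(ρ ∗ orderRaisingMeasure lam lam')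
      = ∫⁻ t, ENNReal.ofReal ((x + t) ^ (-lam)) ∂ρ := by
  rw [Measure.lintegral_conv (by fun_prop)]
  refine lintegral_congr_ae ((ae_nonneg_of_measure_Iio_eq_zero hρ).mono fun t ht => ?_)
  simp_rw [← add_assoc]
  exact lintegral_add_rpow_neg_orderRaisingMeasure hlam hlt (by linarith)

lemma integrable_and_integral_eq_of_lintegral_ofReal_eq {α β : Type*} [MeasurableSpace α]
    [MeasurableSpace β] {μ : Measure α} {ν : Measure β} {f : α → ℝ} {g : β → ℝ}
    (hf : 0 ≤ᵐ[μ] f) (hfm : AEStronglyMeasurable f μ)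
    (hg : 0 ≤ᵐ[ν] g) (hgi : Integrable g ν)
    (h : ∫⁻ a, ENNReal.ofReal (f a) ∂μ = ∫⁻ b, ENNReal.ofReal (g b) ∂ν) :
    Integrable f μ ∧ ∫ a, f a ∂μ = ∫ b, g b ∂ν := by
  refine ⟨⟨hfm, ?_⟩, ?_⟩
  · rw [hasFiniteIntegral_iff_ofReal hf, h]
    exact (hasFiniteIntegral_iff_ofReal hg).1 hgi.2
  · rw [integral_eq_lintegral_of_nonneg_ae hf hfm, integral_eq_lintegral_of_nonneg_ae hg hgi.1, h]

/-- for `0 < λ ≤ λ′`, `S_λ ⊆ S_{λ′}`. -/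
theorem stmt9 (lam lam' : ℝ) (hlam : 0 < lam) (hle : lam ≤ lam')
    (f : ℝ → ℝ) (hf : IsGenStieltjes lam f) :
    IsGenStieltjes lam' f := by
  rcases hle.eq_or_lt with rfl | hlt
  · exact hf
  obtain ⟨C, ρ, hC, hρ, hint, hrep⟩ := hf
  set ρ' := ρ ∗ orderRaisingMeasure lam lam'
  have hρ' : ρ' (Iio 0) = 0 := conv_Iio_eq_zero hρ (orderRaisingMeasure_Iio_eq_zero lam lam')
  have hnonneg : ∀ ν : Measure ℝ, ν (Iio 0) = 0 → ∀ l : ℝ, ∀ x > (0 : ℝ),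
      0 ≤ᵐ[ν] fun t => (x + t) ^ (-l) := fun ν hν l x hx =>
    (ae_nonneg_of_measure_Iio_eq_zero hν).mono fun t ht => rpow_nonneg (by linarith) _
  have key : ∀ x > (0 : ℝ), Integrable (fun u => (x + u) ^ (-lam')) ρ' ∧
      ∫ u, (x + u) ^ (-lam') ∂ρ' = ∫ t, (x + t) ^ (-lam) ∂ρ := fun x hx =>
    integrable_and_integral_eq_of_lintegral_ofReal_eq (hnonneg ρ' hρ' lam' x hx)
      (by fun_prop : Measurable fun u => (x + u) ^ (-lam')).aestronglyMeasurable
      (hnonneg ρ hρ lam x hx) (hint x hx)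
      (lintegral_rpow_neg_conv_orderRaisingMeasure hlam hlt hρ hx)
  exact ⟨C, ρ', hC, hρ', fun x hx => (key x hx).1,
    fun x hx => by rw [hrep x hx, (key x hx).2]⟩
end

section
/- Let f : (0,∞) → ℝ be a function that is a generalized Stieltjes function of order λ for every λ > 0. Then f is a nonnegative constant, i.e. there exists c ≥ 0 with f(x) = c for all x > 0. Conversely, every nonnegative constant function on (0,∞) is a generalized Stieltjes function of every order λ > 0. -/
open MeasureTheory Set Filter

lemma key_est (f : ℝ → ℝ) (lam : ℝ) (hlam : 0 < lam) (h : IsGenStieltjes lam f)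
    {x y : ℝ} (hx : 0 < x) (hxy : x ≤ y) :
    0 ≤ f x - f y ∧ f x - f y ≤ (1 - (x / y) ^ lam) * f x := by
  obtain ⟨C, ρ, hC, hρ, hint, hf⟩ := h
  have hy : 0 < y := hx.trans_le hxy
  have hae : ∀ᵐ t ∂ρ, 0 ≤ t := by
    rw [ae_iff]
    convert hρ using 2
    ext t; simp [not_le]
  have hix := hint x hx
  have hiy := hint y hy
  have hdiff : f x - f y = ∫ t, ((x + t) ^ (-lam) - (y + t) ^ (-lam)) ∂ρ := by
    rw [hf x hx, hf y hy, integral_sub hix hiy]; ring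
  have hr0 : (0:ℝ) ≤ x / y := by positivity
  have hr1 : x / y ≤ 1 := (div_le_one hy).2 hxy
  have hfac : 0 ≤ 1 - (x / y) ^ lam := by
    have := Real.rpow_le_one hr0 hr1 hlam.le
    linarith
  constructor
  · rw [hdiff]
    refine integral_nonneg_of_ae (hae.mono fun t ht => ?_)
    show (0:ℝ) ≤ (x + t) ^ (-lam) - (y + t) ^ (-lam)
    have : (y + t) ^ (-lam) ≤ (x + t) ^ (-lam) :=
      Real.rpow_le_rpow_of_nonpos (by linarith) (by linarith) (by linarith)
    linarith
  · have hpt : ∀ᵐ t ∂ρ,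
        (x + t) ^ (-lam) - (y + t) ^ (-lam) ≤ (1 - (x / y) ^ lam) * (x + t) ^ (-lam) := by
      refine hae.mono fun t ht => ?_
      have ha : (0:ℝ) < x + t := by linarith
      have hb : (0:ℝ) < y + t := by linarith
      have hq : x / y ≤ (x + t) / (y + t) := by
        rw [div_le_div_iff₀ hy hb]; nlinarith
      have h2 : (x / y) ^ lam ≤ ((x + t) / (y + t)) ^ lam :=
        Real.rpow_le_rpow hr0 hq hlam.le
      have h3 : ((x + t) / (y + t)) ^ lam * (x + t) ^ (-lam) = (y + t) ^ (-lam) := by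
        have ha' : (x + t) ^ lam ≠ 0 := by positivity
        have hb' : (y + t) ^ lam ≠ 0 := by positivity
        rw [Real.div_rpow ha.le hb.le, Real.rpow_neg ha.le, Real.rpow_neg hb.le]
        field_simp
      have h4 : (x / y) ^ lam * (x + t) ^ (-lam) ≤ (y + t) ^ (-lam) := by
        rw [← h3]
        exact mul_le_mul_of_nonneg_right h2 (by positivity)
      nlinarith [h4]
    have hInt : f x - f y ≤ ∫ t, (1 - (x / y) ^ lam) * (x + t) ^ (-lam) ∂ρ := by
      rw [hdiff]
      exact integral_mono_ae (hix.sub hiy) (hix.const_mul _) hpt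
    have hIc : ∫ t, (1 - (x / y) ^ lam) * (x + t) ^ (-lam) ∂ρ
        = (1 - (x / y) ^ lam) * (f x - C) := by
      rw [integral_const_mul]
      have : ∫ t, (x + t) ^ (-lam) ∂ρ = f x - C := by
        rw [hf x hx]; ring
      rw [this]
    have hle : (1 - (x / y) ^ lam) * (f x - C) ≤ (1 - (x / y) ^ lam) * f x :=
      mul_le_mul_of_nonneg_left (by linarith) hfac
    linarith [hInt, hIc ▸ hInt]

lemma const_of_all (f : ℝ → ℝ) (h : ∀ lam > (0 : ℝ), IsGenStieltjes lam f)
    {x y : ℝ} (hx : 0 < x) (hxy : x ≤ y) : f x = f y := by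
  have hy : 0 < y := hx.trans_le hxy
  have h1 : ∀ lam > (0:ℝ), 0 ≤ f x - f y ∧ f x - f y ≤ (1 - (x / y) ^ lam) * f x :=
    fun lam hlam => key_est f lam hlam (h lam hlam) hx hxy
  have hconv : Tendsto (fun lam : ℝ => (1 - (x / y) ^ lam) * f x) (nhdsWithin 0 (Set.Ioi 0))
      (nhds 0) := by
    have hc : ContinuousAt (fun lam : ℝ => (1 - (x / y) ^ lam) * f x) 0 := by
      have : ContinuousAt (fun lam : ℝ => (x / y) ^ lam) 0 :=
        Real.continuousAt_const_rpow (by positivity)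
      fun_prop
    have h0 : (1 - (x / y) ^ (0:ℝ)) * f x = 0 := by
      rw [Real.rpow_zero]; ring
    have h5 : Tendsto (fun lam : ℝ => (1 - (x / y) ^ lam) * f x) (nhdsWithin 0 (Set.Ioi 0))
        (nhds ((1 - (x / y) ^ (0:ℝ)) * f x)) :=
      hc.tendsto.mono_left nhdsWithin_le_nhds
    rwa [h0] at h5
  have h2 : f x - f y ≤ 0 := by
    refine ge_of_tendsto hconv ?_
    filter_upwards [self_mem_nhdsWithin] with lam hlam
    exact (h1 lam hlam).2
  have h3 : 0 ≤ f x - f y := (h1 1 one_pos).1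
  linarith

/-- a function that is generalized Stieltjes of every order `λ > 0` is a
nonnegative constant on `(0,∞)`; conversely, every nonnegative constant function is a
generalized Stieltjes function of every order `λ > 0`. -/
theorem stmt13 (f : ℝ → ℝ) :
    ((∀ lam > (0 : ℝ), IsGenStieltjes lam f) →
        ∃ c : ℝ, 0 ≤ c ∧ ∀ x > (0 : ℝ), f x = c) ∧
      ∀ c : ℝ, 0 ≤ c → ∀ lam > (0 : ℝ), IsGenStieltjes lam (fun _ => c) := by
  constructor
  · intro h
    refine ⟨f 1, ?_, ?_⟩
    · obtain ⟨C, ρ, hC, hρ, hint, hf⟩ := h 1 one_pos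
      have hae : ∀ᵐ t ∂ρ, 0 ≤ t := by
        rw [ae_iff]
        convert hρ using 2
        ext t; simp [not_le]
      have : 0 ≤ ∫ t, ((1:ℝ) + t) ^ (-(1:ℝ)) ∂ρ :=
        integral_nonneg_of_ae (hae.mono fun t ht => by positivity)
      have := hf 1 one_pos
      linarith
    · intro x hx
      rcases le_total x 1 with hx1 | hx1
      · exact const_of_all f h hx hx1
      · exact (const_of_all f h one_pos hx1).symm
  · intro c hc lam hlam
    refine ⟨c, 0, hc, by simp, fun x hx => integrable_zero_measure, fun x hx => ?_⟩
    simp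
end

section
/- Let λ > 0, let t ≥ 0, and let n, k ≥ 0 be integers. Then for all x > 0, (−1)^n x^{−(n+λ−1)} · (d/dx)^k [ x^{n+k+λ−1} · (d/dx)^n ( (x+t)^{−λ} ) ] = (Γ(n+k+λ)/Γ(λ)) · t^k/(x+t)^{n+k+λ}; that is, applying (d/dx)^n to y ↦ (y+t)^{−λ}, multiplying by y^{n+k+λ−1}, applying (d/dx)^k, evaluating at x, and multiplying by (−1)^n x^{−(n+λ−1)} yields (Γ(n+k+λ)/Γ(λ)) t^k (x+t)^{−(n+k+λ)}. -/
/-!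
Differentiating `(x + t)^(-λ)` `n` times gives `(-1)^n (λ)_n (x + t)^(-μ)` with `μ = λ + n`, so
everything reduces to `(d/dx)^k [x^(μ+k-1) (x+t)^(-μ)] = (μ)_k t^k x^(μ-1) (x+t)^(-(μ+k))`.
By the Leibniz rule the `i`-th term of the left side carries the Pochhammer factor
`(μ+k-1)↓i · (-μ)↓(k-i) = (-1)^(k-i) (μ)_k`, and what remains is the binomial expansion of
`((x + t) - x)^k = t^k`. Finally `Γ(λ + n + k) = (λ)_(n+k) Γ(λ)`.
-/

open Polynomial Finset

theorem ascPochhammer_eval_add {R : Type*} [CommSemiring R] (r : R) (m n : ℕ) :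
    (ascPochhammer R (m + n)).eval r =
      (ascPochhammer R m).eval r * (ascPochhammer R n).eval (r + m) := by
  rw [← ascPochhammer_mul, eval_mul, eval_comp, eval_add, eval_X, eval_natCast]

theorem descPochhammer_eval_neg {R : Type*} [CommRing R] (r : R) (n : ℕ) :
    (descPochhammer R n).eval (-r) = (-1) ^ n * (ascPochhammer R n).eval r := by
  rw [← neg_neg r, ascPochhammer_eval_neg_eq_descPochhammer, neg_neg, ← mul_assoc, ← mul_pow]
  simp

theorem descPochhammer_eval_mul_descPochhammer_eval_neg {R : Type*} [CommRing R] (r : R)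
    (i j : ℕ) :
    (descPochhammer R i).eval (r + j + i - 1) * (descPochhammer R j).eval (-r) =
      (-1) ^ j * (ascPochhammer R (i + j)).eval r := by
  rw [descPochhammer_eval_eq_ascPochhammer, descPochhammer_eval_neg, add_comm i,
    ascPochhammer_eval_add, show r + j + i - 1 - i + 1 = r + j by ring]
  ring

theorem Real.Gamma_add_nat_eq_ascPochhammer_mul {s : ℝ} (hs : 0 < s) (n : ℕ) :
    Real.Gamma (s + n) = (ascPochhammer ℝ n).eval s * Real.Gamma s := by
  induction n with
  | zero => simp
  | succ n ih =>
    rw [Nat.cast_succ, ← add_assoc, Real.Gamma_add_one (by positivity), ih,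
      ascPochhammer_succ_eval]
    ring

theorem iteratedDeriv_add_const_rpow (b t x : ℝ) (n : ℕ) :
    iteratedDeriv n (fun z => (z + t) ^ b) x =
      (descPochhammer ℝ n).eval b * (x + t) ^ (b - n) := by
  rw [iteratedDeriv_comp_add_const n (fun z => z ^ b), iteratedDeriv_eq_iterate]
  exact Real.iter_deriv_rpow_const b (x + t) n

theorem iteratedDeriv_rpow_mul_add_rpow {a b t x : ℝ} (hx : x ≠ 0) (hxt : x + t ≠ 0)
    (k : ℕ) :
    iteratedDeriv k (fun y => y ^ a * (y + t) ^ b) x = ∑ i ∈ range (k + 1),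
      k.choose i * ((descPochhammer ℝ i).eval a * x ^ (a - i)) *
        ((descPochhammer ℝ (k - i)).eval b * (x + t) ^ (b - (k - i : ℕ))) := by
  have hf : ContDiffAt ℝ k (fun y : ℝ => y ^ a) x := Real.contDiffAt_rpow_const (Or.inl hx)
  have hg : ContDiffAt ℝ k (fun y : ℝ => (y + t) ^ b) x :=
    (Real.contDiffAt_rpow_const (Or.inl hxt)).comp x (contDiffAt_id.add contDiffAt_const)
  rw [show (fun y : ℝ => y ^ a * (y + t) ^ b) = (fun y => y ^ a) * fun y => (y + t) ^ b from rfl,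
    iteratedDeriv_mul hf hg]
  simp only [iteratedDeriv_add_const_rpow, iteratedDeriv_eq_iterate, Real.iter_deriv_rpow_const]

theorem iteratedDeriv_rpow_mul_add_rpow_neg {μ t x : ℝ} (hx : 0 < x) (hxt : 0 < x + t)
    (k : ℕ) :
    iteratedDeriv k (fun y => y ^ (μ + k - 1) * (y + t) ^ (-μ)) x =
      (ascPochhammer ℝ k).eval μ * x ^ (μ - 1) * (x + t) ^ (-(μ + k)) * t ^ k := by
  rw [iteratedDeriv_rpow_mul_add_rpow hx.ne' hxt.ne']
  calc _ = ∑ i ∈ range (k + 1),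
        (ascPochhammer ℝ k).eval μ * x ^ (μ - 1) * (x + t) ^ (-(μ + k)) *
          ((x + t) ^ i * (-x) ^ (k - i) * k.choose i) := by
        refine sum_congr rfl fun i hi => ?_
        obtain ⟨j, rfl⟩ := Nat.exists_eq_add_of_le (mem_range_succ_iff.mp hi)
        have hpoch := descPochhammer_eval_mul_descPochhammer_eval_neg μ i j
        simp only [Nat.add_sub_cancel_left, Nat.cast_add] at hpoch ⊢
        rw [show μ + (i + j) - 1 - i = μ - 1 + j by ring, Real.rpow_add hx, Real.rpow_natCast,
          show -μ - j = -(μ + (i + j)) + i by ring, Real.rpow_add hxt, Real.rpow_natCast,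
          show μ + (i + j) - 1 = μ + j + i - 1 by ring]
        linear_combination ((i + j).choose i * x ^ (μ - 1) * x ^ j *
          (x + t) ^ (-(μ + (i + j))) * (x + t) ^ i) * hpoch
    _ = _ := by rw [← mul_sum, ← add_pow, add_neg_cancel_comm]

/-- for `λ > 0`, `t ≥ 0`, and `n, k ≥ 0`,
`(−1)^n x^{−(n+λ−1)} (d/dx)^k [ x^{n+k+λ−1} (d/dx)^n ((x+t)^{−λ}) ]
  = (Γ(n+k+λ)/Γ(λ)) t^k/(x+t)^{n+k+λ}` for all `x > 0`. -/
theorem stmt15 (lam : ℝ) (hlam : 0 < lam) (t : ℝ) (ht : 0 ≤ t) (n k : ℕ) :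
    ∀ x > (0 : ℝ),
      (-1 : ℝ) ^ n * x ^ (-((n : ℝ) + lam - 1)) *
          iteratedDeriv k
            (fun y => y ^ ((n : ℝ) + k + lam - 1) *
              iteratedDeriv n (fun z => (z + t) ^ (-lam)) y) x
        = Real.Gamma ((n : ℝ) + k + lam) / Real.Gamma lam *
            (t ^ k / (x + t) ^ ((n : ℝ) + k + lam)) := by
  intro x hx
  have hxt : 0 < x + t := by linarith
  have hinner : (fun y => y ^ ((n : ℝ) + k + lam - 1) *
      iteratedDeriv n (fun z => (z + t) ^ (-lam)) y) =
        fun y => (descPochhammer ℝ n).eval (-lam) *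
          (y ^ (lam + n + k - 1) * (y + t) ^ (-(lam + n))) := by
    ext y
    rw [iteratedDeriv_add_const_rpow, show (n : ℝ) + k + lam - 1 = lam + n + k - 1 by ring,
      show -lam - n = -(lam + n) by ring]
    ring
  have hGamma : Real.Gamma ((n : ℝ) + k + lam) =
      (ascPochhammer ℝ n).eval lam * (ascPochhammer ℝ k).eval (lam + n) * Real.Gamma lam := by
    rw [show (n : ℝ) + k + lam = lam + (n + k : ℕ) by push_cast; ring,
      Real.Gamma_add_nat_eq_ascPochhammer_mul hlam, ascPochhammer_eval_add]
  have hxpow : x ^ (-((n : ℝ) + lam - 1)) * x ^ (lam + n - 1) = 1 := by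
    rw [← Real.rpow_add hx, show -((n : ℝ) + lam - 1) + (lam + n - 1) = 0 by ring,
      Real.rpow_zero]
  have hsign : (-1 : ℝ) ^ n * (-1) ^ n = 1 := by rw [← mul_pow]; norm_num
  rw [hinner, iteratedDeriv_const_mul_field, iteratedDeriv_rpow_mul_add_rpow_neg hx hxt,
    descPochhammer_eval_neg, show -(lam + n + k) = -((n : ℝ) + k + lam) by ring,
    Real.rpow_neg hxt.le, hGamma, mul_div_cancel_right₀ _ (Real.Gamma_pos_of_pos hlam).ne']
  calc _ = ((-1) ^ n * (-1) ^ n) * (x ^ (-((n : ℝ) + lam - 1)) * x ^ (lam + n - 1)) *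
        ((ascPochhammer ℝ n).eval lam * (ascPochhammer ℝ k).eval (lam + n)) *
        (t ^ k * ((x + t) ^ ((n : ℝ) + k + lam))⁻¹) := by ring
    _ = _ := by rw [hsign, hxpow, div_eq_mul_inv]; ring
end
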